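/- For all natural numbers k and n, Δ(k+1,n+1) + M(k,n)·(k+1) + 1 = Δ(k+1,n) + M(k+1,n)·(k+2). -/

import Mathlib

/-!
For `m ≤ n` the recursion for `g` has the closed form
`g i m x n = ∑_{t ≤ m+1} C(n+2, t) iᵗ C(x + m+1-t, m+1-t)`: by the hockey-stick identity its
partial sums over `x` have the same shape, and since `C(n+2, t) C(n+2-t, m+2-t) = C(n+2, m+2) C(m+2, t)`
the full row `∑_{x ≤ n-m}` collapses to `C(n+2, m+2) ((i+1)^(m+2) - i^(m+2))`. Summing over `m`
with the binomial theorem gives `Δ i n = (i+2)^(n+2) - (i+1)^(n+2) - (n+2)`, the sum defining `M`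
telescopes to `M k n = (k+2)^(n+2)`, and the identity becomes a polynomial identity.
-/

def gAux : ℕ → ℕ → ℕ → ℕ → ℕ
  | 0, i, x, n => i * (n + 2) + x + 1
  | m + 1, i, x, n =>
      (∑ a ∈ Finset.range (x + 1), gAux m i a n) +
        ∑ j ∈ Finset.range i, ∑ a ∈ Finset.range (n + 1 - m), gAux m j a n

def g (i m x n : ℕ) : ℕ := gAux m i x n

def Δ (i n : ℕ) : ℕ := ∑ m ∈ Finset.range (n + 1), ∑ x ∈ Finset.range (n + 1 - m), g i m x n

def M (k n : ℕ) : ℕ := (k + 1) * (n + 2) + 1 + ∑ i ∈ Finset.range (k + 1), Δ i n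

open Finset

def gClosed (n m i x : ℕ) : ℕ :=
  ∑ t ∈ range (m + 2), (n + 2).choose t * i ^ t * (x + (m + 1 - t)).choose (m + 1 - t)

theorem sum_range_choose_mul_pow_add_pow {R : Type*} [CommSemiring R] (x : R) (k : ℕ) :
    ∑ t ∈ range k, (k.choose t : R) * x ^ t + x ^ k = (x + 1) ^ k := by
  rw [add_pow, sum_range_succ]
  simp [mul_comm]

theorem sum_range_choose_add_two_mul_pow {R : Type*} [CommSemiring R] (y : R) (n : ℕ) :
    ∑ m ∈ range (n + 1), ((n + 2).choose (m + 2) : R) * y ^ (m + 2) + (n + 2) * y + 1 =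
      (y + 1) ^ (n + 2) := by
  rw [add_pow, sum_range_succ' _ (n + 2), sum_range_succ' _ (n + 1)]
  simp [mul_comm]

theorem sum_range_succ_gClosed (n m i N : ℕ) :
    ∑ a ∈ range (N + 1), gClosed n m i a =
      ∑ t ∈ range (m + 2),
        (n + 2).choose t * i ^ t * (N + (m + 1 - t) + 1).choose (m + 1 - t + 1) := by
  simp only [gClosed]
  rw [sum_comm]
  refine sum_congr rfl fun t _ => ?_
  rw [← mul_sum, Nat.sum_range_add_choose]

theorem sum_range_gClosed_add {n m : ℕ} (hm : m ≤ n) (i : ℕ) :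
    ∑ a ∈ range (n + 1 - m), gClosed n m i a + (n + 2).choose (m + 2) * i ^ (m + 2) =
      (n + 2).choose (m + 2) * (i + 1) ^ (m + 2) := by
  have hterm : ∀ t ∈ range (m + 2),
      (n + 2).choose t * i ^ t * (n - m + (m + 1 - t) + 1).choose (m + 1 - t + 1) =
        (n + 2).choose (m + 2) * ((m + 2).choose t * i ^ t) := by
    intro t ht
    have ht : t < m + 2 := mem_range.mp ht
    rw [show n - m + (m + 1 - t) + 1 = n + 2 - t by omega,
      show m + 1 - t + 1 = m + 2 - t by omega, ← mul_assoc, Nat.choose_mul ht.le]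
    ring
  rw [show n + 1 - m = n - m + 1 by omega, sum_range_succ_gClosed, sum_congr rfl hterm,
    ← mul_sum, ← mul_add]
  exact_mod_cast congrArg _ (sum_range_choose_mul_pow_add_pow i (m + 2))

theorem sum_range_sum_range_gClosed {n m : ℕ} (hm : m ≤ n) (i : ℕ) :
    ∑ j ∈ range i, ∑ a ∈ range (n + 1 - m), gClosed n m j a =
      (n + 2).choose (m + 2) * i ^ (m + 2) :=
  sum_range_induction _ (fun j => (n + 2).choose (m + 2) * j ^ (m + 2)) (by simp) i fun j _ =>
    (sum_range_gClosed_add hm j).symm.trans (add_comm _ _)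

theorem gClosed_succ {n m : ℕ} (hm : m ≤ n) (i x : ℕ) :
    gClosed n (m + 1) i x =
      ∑ a ∈ range (x + 1), gClosed n m i a +
        ∑ j ∈ range i, ∑ a ∈ range (n + 1 - m), gClosed n m j a := by
  rw [sum_range_succ_gClosed, sum_range_sum_range_gClosed hm, gClosed, sum_range_succ]
  congr 1
  · refine sum_congr rfl fun t ht => ?_
    have ht : t < m + 2 := mem_range.mp ht
    rw [show x + (m + 1 + 1 - t) = x + (m + 1 - t) + 1 by omega,
      show m + 1 + 1 - t = m + 1 - t + 1 by omega]
  · simp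

theorem g_eq_gClosed {n m : ℕ} (hm : m ≤ n) (i x : ℕ) : g i m x n = gClosed n m i x := by
  induction m generalizing i x with
  | zero =>
    simp [g, gAux, gClosed, sum_range_succ, mul_comm, add_comm, add_left_comm, add_assoc]
  | succ m ih =>
    simp only [g] at ih ⊢
    rw [gAux, gClosed_succ (by omega)]
    simp only [ih (by omega)]

theorem Δ_add_pow_add (i n : ℕ) : Δ i n + (i + 1) ^ (n + 2) + (n + 2) = (i + 2) ^ (n + 2) := by
  have hΔ : Δ i n + ∑ m ∈ range (n + 1), (n + 2).choose (m + 2) * i ^ (m + 2) =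
      ∑ m ∈ range (n + 1), (n + 2).choose (m + 2) * (i + 1) ^ (m + 2) := by
    rw [Δ, ← sum_add_distrib]
    refine sum_congr rfl fun m hm => ?_
    have hm : m ≤ n := Nat.lt_succ_iff.mp (mem_range.mp hm)
    simp only [g_eq_gClosed hm]
    exact sum_range_gClosed_add hm i
  have h₀ := sum_range_choose_add_two_mul_pow i n
  have h₁ := sum_range_choose_add_two_mul_pow (i + 1) n
  push_cast at h₀ h₁
  linear_combination hΔ - h₀ + h₁

theorem M_eq_pow (k n : ℕ) : M k n = (k + 2) ^ (n + 2) := by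
  induction k with
  | zero => simpa [M, add_comm, add_assoc] using Δ_add_pow_add 0 n
  | succ k ih =>
    have hM : M (k + 1) n = M k n + Δ (k + 1) n + (n + 2) := by
      simp only [M, sum_range_succ _ (k + 1)]
      ring
    rw [hM, ih, ← Δ_add_pow_add (k + 1) n]
    ring

theorem delta_M_identity (k n : ℕ) :
    Δ (k + 1) (n + 1) + M k n * (k + 1) + 1 = Δ (k + 1) n + M (k + 1) n * (k + 2) := by
  have hA := Δ_add_pow_add (k + 1) (n + 1)
  have hB := Δ_add_pow_add (k + 1) n
  rw [M_eq_pow, M_eq_pow]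
  linear_combination hA - hB
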